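/- arXiv:2511.09400 — 4 statements merged into one kernel-verified Lean document; each statement's English description precedes it below -/
import Mathlib

section
/- Let b, n, d be natural numbers with n < b. Let δ, L, U : Fin b → Fin d → ℝ be families of per-sample gradient vectors and their element-wise bounds, satisfying L i j ≤ δ i j ≤ U i j for all i : Fin b and j : Fin d. Then for every subset S ⊆ Fin b with |S| ≥ b − n and S nonempty, and every coordinate j : Fin d, the batch-average gradient satisfies (1/(b−n)) · SEMin_{b−n}{L i j}_{i=1}^{b} ≤ (1/|S|) · ∑_{i ∈ S} δ i j ≤ (1/(b−n)) · SEMax_{b−n}{U i j}_{i=1}^{b}. (Theorem: descent direction bounds under removal of up to n training samples.) -/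
/-- `SEMin a k`: the sum of the `k` smallest elements of the family `a`
(counted with multiplicity). -/
noncomputable def SEMin {b : ℕ} (a : Fin b → ℝ) (k : ℕ) : ℝ :=
  (((List.ofFn a).mergeSort (· ≤ ·)).take k).sum

/-- `SEMax a k`: the sum of the `k` largest elements of the family `a`
(counted with multiplicity). -/
noncomputable def SEMax {b : ℕ} (a : Fin b → ℝ) (k : ℕ) : ℝ :=
  (((List.ofFn a).mergeSort (· ≥ ·)).take k).sum

/-!
Let `l` be the values of a family sorted increasingly. The `i`-th entry of any sublist of `l` is
at least `l[i]`, so any `m` of the values sum to at least the sum of the `m` smallest. In a sorted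
list every element of a prefix lies below every element after it, so prefix averages increase
with the length of the prefix. For `k = b - n ≤ m = |S|` this gives
`SEMin L k / k ≤ SEMin L m / m ≤ avg_S L ≤ avg_S δ`; the upper bound is the same argument in the
order dual.
-/

namespace List

section Preorder

variable {M : Type*} [Preorder M] {l t : List M}

theorem SortedLE.getElem_le_getElem_of_sublist (hl : l.SortedLE) (h : t <+ l) (i : ℕ)
    (hi : i < t.length) : l[i]'(hi.trans_le h.length_le) ≤ t[i] := by
  induction h generalizing i with
  | slnil => simp at hi
  | @cons t l a hsub ih =>
    have hi' : i + 1 < (a :: l).length := by simpa using hi.trans_le hsub.length_le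
    exact (hl.getElem_le_getElem_of_le (hj := hi') i.le_succ).trans
      (ih (sortedLE_iff_pairwise.1 hl).of_cons.sortedLE i hi)
  | @cons_cons t l a hsub ih =>
    cases i with
    | zero => exact le_rfl
    | succ i =>
      exact ih (sortedLE_iff_pairwise.1 hl).of_cons.sortedLE i (Nat.lt_of_succ_lt_succ hi)

end Preorder

section OrderedAddMonoid

variable {M : Type*} [AddCommMonoid M] [PartialOrder M] [IsOrderedAddMonoid M] {l s t : List M}

theorem length_nsmul_sum_le_of_forall_le (h : ∀ x ∈ s, ∀ y ∈ t, x ≤ y) :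
    t.length • s.sum ≤ s.length • t.sum := by
  induction s with
  | nil => simp
  | cons x s ih =>
    rw [sum_cons, length_cons, nsmul_add, succ_nsmul, add_comm]
    exact add_le_add (ih fun x hx => h x (mem_cons_of_mem _ hx))
      (card_nsmul_le_sum t x (h x mem_cons_self))

theorem SortedLE.length_nsmul_sum_take_le (hl : l.SortedLE) (k : ℕ) :
    l.length • (l.take k).sum ≤ (l.take k).length • l.sum := by
  have hsplit := take_append_drop k l
  have hcross : ∀ x ∈ l.take k, ∀ y ∈ l.drop k, x ≤ y := by
    have hpair := hl.pairwise
    rw [← hsplit] at hpair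
    exact (pairwise_append.1 hpair).2.2
  calc l.length • (l.take k).sum
      = (l.take k).length • (l.take k).sum + (l.drop k).length • (l.take k).sum := by
        rw [← add_nsmul, ← length_append, hsplit]
    _ ≤ (l.take k).length • (l.take k).sum + (l.take k).length • (l.drop k).sum := by
        grw [length_nsmul_sum_le_of_forall_le hcross]
    _ = (l.take k).length • l.sum := by rw [← nsmul_add, ← sum_append, hsplit]

theorem SortedLE.sum_take_length_le_of_subperm (hl : l.SortedLE) (h : t <+~ l) :
    (l.take t.length).sum ≤ t.sum := by
  obtain ⟨t', hperm, hsub⟩ := h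
  rw [← hperm.length_eq, ← hperm.sum_eq]
  refine Forall₂.sum_le_sum (forall₂_iff_get.2 ⟨by simp [hsub.length_le], fun i _ hi => ?_⟩)
  simpa using hl.getElem_le_getElem_of_sublist hsub i hi

theorem SortedLE.length_nsmul_sum_take_le_of_subperm (hl : l.SortedLE) (h : t <+~ l) {k : ℕ}
    (hk : k ≤ t.length) : t.length • (l.take k).sum ≤ k • t.sum := by
  have hlen : (l.take t.length).length = t.length := by simp [h.length_le]
  have hprefix := hl.pairwise.sublist (take_sublist t.length l) |>.sortedLE
  have key := hprefix.length_nsmul_sum_take_le k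
  rw [hlen, take_take, min_eq_left hk, length_take, min_eq_left (hk.trans h.length_le)] at key
  exact key.trans (nsmul_le_nsmul_right (hl.sum_take_length_le_of_subperm h) k)

end OrderedAddMonoid

end List

theorem Finset.toList_map_subperm_ofFn {α : Type*} {b : ℕ} (S : Finset (Fin b))
    (a : Fin b → α) : (S.toList.map a).Subperm (List.ofFn a) := by
  obtain ⟨l, hperm, hsub⟩ := S.nodup_toList.subperm fun i _ => List.mem_finRange i
  exact List.ofFn_eq_map ▸ ⟨l.map a, hperm.map a, hsub.map a⟩

theorem SEMin_mul_card_le {b : ℕ} (a : Fin b → ℝ) {k : ℕ} {S : Finset (Fin b)}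
    (hk : k ≤ S.card) : SEMin a k * S.card ≤ (∑ i ∈ S, a i) * k := by
  have key := List.sortedLE_mergeSort.length_nsmul_sum_take_le_of_subperm
    ((S.toList_map_subperm_ofFn a).trans (List.mergeSort_perm _ _).symm.subperm)
    (by simpa using hk : k ≤ (S.toList.map a).length)
  simpa [SEMin, nsmul_eq_mul, Finset.sum_map_toList, mul_comm] using key

theorem sum_mul_le_SEMax_mul_card {b : ℕ} (a : Fin b → ℝ) {k : ℕ} {S : Finset (Fin b)}
    (hk : k ≤ S.card) : (∑ i ∈ S, a i) * k ≤ SEMax a k * S.card := by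
  set l := (List.ofFn a).mergeSort (· ≥ ·)
  have hsorted : List.SortedLE (α := ℝᵒᵈ) l := List.sortedGE_mergeSort (l := List.ofFn a)
  have key : k • (S.toList.map a).sum ≤ (S.toList.map a).length • (l.take k).sum :=
    hsorted.length_nsmul_sum_take_le_of_subperm
      ((S.toList_map_subperm_ofFn a).trans (List.mergeSort_perm _ _).symm.subperm)
      (by simpa using hk : k ≤ (S.toList.map a).length)
  simpa [SEMax, l, nsmul_eq_mul, Finset.sum_map_toList, mul_comm] using key

theorem descent_direction_bounds_removal_general
    (b n d : ℕ) (hn : n < b)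
    (δ L U : Fin b → Fin d → ℝ)
    (hL : ∀ i j, L i j ≤ δ i j) (hU : ∀ i j, δ i j ≤ U i j)
    (S : Finset (Fin b)) (hS : b - n ≤ S.card) (j : Fin d) :
    (1 / ((b : ℝ) - n)) * SEMin (fun i => L i j) (b - n) ≤
        (1 / (S.card : ℝ)) * ∑ i ∈ S, δ i j ∧
      (1 / (S.card : ℝ)) * ∑ i ∈ S, δ i j ≤
        (1 / ((b : ℝ) - n)) * SEMax (fun i => U i j) (b - n) := by
  have hk : 0 < b - n := Nat.sub_pos_of_lt hn
  have hk_pos : (0 : ℝ) < (b - n : ℕ) := by exact_mod_cast hk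
  have hS_pos : (0 : ℝ) < S.card := by exact_mod_cast hk.trans_le hS
  rw [← Nat.cast_sub hn.le]
  simp only [one_div_mul_eq_div]
  rw [div_le_div_iff₀ hk_pos hS_pos, div_le_div_iff₀ hS_pos hk_pos]
  constructor
  · calc SEMin (fun i => L i j) (b - n) * S.card ≤ (∑ i ∈ S, L i j) * (b - n : ℕ) :=
          SEMin_mul_card_le _ hS
      _ ≤ (∑ i ∈ S, δ i j) * (b - n : ℕ) := by gcongr with i; exact hL i j
  · calc (∑ i ∈ S, δ i j) * (b - n : ℕ) ≤ (∑ i ∈ S, U i j) * (b - n : ℕ) := by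
          gcongr with i; exact hU i j
      _ ≤ SEMax (fun i => U i j) (b - n) * S.card := sum_mul_le_SEMax_mul_card _ hS

/-- Descent direction bounds under removal of up to `n` of the `b` training samples. -/
theorem descent_direction_bounds_removal
    (b n d : ℕ) (hn : n < b)
    (δ L U : Fin b → Fin d → ℝ)
    (hL : ∀ i j, L i j ≤ δ i j) (hU : ∀ i j, δ i j ≤ U i j)
    (S : Finset (Fin b)) (hS : b - n ≤ S.card) (hSne : S.Nonempty) (j : Fin d) :
    (1 / ((b : ℝ) - n)) * SEMin (fun i => L i j) (b - n) ≤
        (1 / (S.card : ℝ)) * ∑ i ∈ S, δ i j ∧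
      (1 / (S.card : ℝ)) * ∑ i ∈ S, δ i j ≤
        (1 / ((b : ℝ) - n)) * SEMax (fun i => U i j) (b - n) :=
  descent_direction_bounds_removal_general b n d hn δ L U hL hU S hS j
end

section
/- Let b, n, d be natural numbers with n ≤ b, and let κ ≥ 0. Let c, L, U : Fin b → Fin d → ℝ be the nominal clipped per-sample gradients and their element-wise bounds, satisfying −κ ≤ L i j ≤ c i j ≤ U i j ≤ κ for all i, j. Let c̃ : Fin b → Fin d → ℝ be a perturbed family of clipped gradients such that −κ ≤ c̃ i j ≤ κ for all i, j, and there exists a subset S ⊆ Fin b with |S| ≥ b − n and c̃ i = c i for all i ∈ S (i.e., up to n samples are replaced by arbitrary samples). Then for every coordinate j : Fin d, (1/b) · (SEMin_{b−n}{L i j}_{i=1}^{b} − n·κ) ≤ (1/b) · ∑_{i=1}^{b} c̃ i j ≤ (1/b) · (SEMax_{b−n}{U i j}_{i=1}^{b} + n·κ). (Theorem: descent direction bounds under arbitrary substitution of up to n samples with element-wise gradient clipping at level κ.) -/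
section SortedPrefix

variable {α : Type*} [AddCommMonoid α] [LinearOrder α] [IsOrderedAddMonoid α]

theorem List.sum_take_card_le_sum_of_pairwise {l : List α} (hl : l.Pairwise (· ≤ ·))
    {m : Multiset α} (hm : m ≤ (l : Multiset α)) : (l.take (Multiset.card m)).sum ≤ m.sum := by
  induction l generalizing m with
  | nil => simp [Multiset.le_zero.mp hm]
  | cons x l ih =>
    obtain ⟨hx, hl⟩ := List.pairwise_cons.mp hl
    rcases Multiset.empty_or_exists_mem m with rfl | ⟨y, hy⟩
    · simp
    -- peel off `x` itself if it occurs in `m`, and otherwise any element, which is `≥ x`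
    obtain ⟨z, m', rfl, hxz, hm'⟩ : ∃ z m', m = z ::ₘ m' ∧ x ≤ z ∧ m' ≤ (l : Multiset α) := by
      by_cases hxm : x ∈ m
      · obtain ⟨m', rfl⟩ := Multiset.exists_cons_of_mem hxm
        exact ⟨x, m', rfl, le_rfl, (Multiset.cons_le_cons_iff x).mp hm⟩
      · have hml : m ≤ (l : Multiset α) := (Multiset.le_cons_of_notMem hxm).mp hm
        obtain ⟨m', rfl⟩ := Multiset.exists_cons_of_mem hy
        exact ⟨y, m', rfl, hx y (by simpa using Multiset.mem_of_le hml hy),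
          (Multiset.le_cons_self m' y).trans hml⟩
    simpa using add_le_add hxz (ih hl hm')

theorem List.sum_le_sum_take_card_of_pairwise_ge {l : List α} (hl : l.Pairwise (· ≥ ·))
    {m : Multiset α} (hm : m ≤ (l : Multiset α)) : m.sum ≤ (l.take (Multiset.card m)).sum :=
  List.sum_take_card_le_sum_of_pairwise (α := αᵒᵈ) hl hm

end SortedPrefix

theorem Finset.val_map_le_mergeSort_ofFn {α : Type*} {b : ℕ} (a : Fin b → α)
    (T : Finset (Fin b)) (le : α → α → Bool) :
    T.val.map a ≤ ((List.ofFn a).mergeSort le : Multiset α) :=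
  (Multiset.coe_eq_coe.mpr (List.mergeSort_perm _ le)).symm ▸ Fin.univ_val_map a ▸
    Multiset.map_le_map (Finset.val_le_iff.mpr (Finset.subset_univ T))

theorem SEMin_card_le_sum {b : ℕ} (a : Fin b → ℝ) (T : Finset (Fin b)) :
    SEMin a T.card ≤ ∑ i ∈ T, a i := by
  have h := List.sum_take_card_le_sum_of_pairwise (List.pairwise_mergeSort' (· ≤ ·) _)
    (T.val_map_le_mergeSort_ofFn a _)
  rwa [Multiset.card_map] at h

theorem sum_le_SEMax_card {b : ℕ} (a : Fin b → ℝ) (T : Finset (Fin b)) :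
    ∑ i ∈ T, a i ≤ SEMax a T.card := by
  have h := List.sum_le_sum_take_card_of_pairwise_ge (List.pairwise_mergeSort' (· ≥ ·) _)
    (T.val_map_le_mergeSort_ofFn a _)
  rwa [Multiset.card_map] at h

theorem descent_direction_bounds_substitution_general
    (b n d : ℕ) (hn : n ≤ b) (κ : ℝ)
    (c L U : Fin b → Fin d → ℝ)
    (hL : ∀ i j, L i j ≤ c i j)
    (hU : ∀ i j, c i j ≤ U i j)
    (c' : Fin b → Fin d → ℝ)
    (hc'lo : ∀ i j, -κ ≤ c' i j) (hc'hi : ∀ i j, c' i j ≤ κ)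
    (S : Finset (Fin b)) (hScard : b - n ≤ S.card)
    (hSfix : ∀ i ∈ S, c' i = c i) (j : Fin d) :
    (1 / (b : ℝ)) * (SEMin (fun i => L i j) (b - n) - n * κ) ≤
        (1 / (b : ℝ)) * ∑ i, c' i j ∧
      (1 / (b : ℝ)) * ∑ i, c' i j ≤
        (1 / (b : ℝ)) * (SEMax (fun i => U i j) (b - n) + n * κ) := by
  obtain ⟨T, hTS, hT⟩ := Finset.exists_subset_card_eq hScard
  have hTc : Tᶜ.card = n := by rw [Finset.card_compl, hT, Fintype.card_fin]; omega
  have hfix : ∀ i ∈ T, c' i j = c i j := fun i hi => congrFun (hSfix i (hTS hi)) j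
  have hmin : SEMin (fun i => L i j) (b - n) ≤ ∑ i ∈ T, c' i j :=
    hT ▸ (SEMin_card_le_sum _ T).trans (Finset.sum_le_sum fun i hi => hfix i hi ▸ hL i j)
  have hmax : ∑ i ∈ T, c' i j ≤ SEMax (fun i => U i j) (b - n) :=
    hT ▸ (Finset.sum_le_sum fun i hi => hfix i hi ▸ hU i j).trans (sum_le_SEMax_card _ T)
  have hlo : -(n * κ) ≤ ∑ i ∈ Tᶜ, c' i j := by
    simpa [hTc] using Tᶜ.card_nsmul_le_sum _ (-κ) fun i _ => hc'lo i j
  have hhi : ∑ i ∈ Tᶜ, c' i j ≤ n * κ := by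
    simpa [hTc] using Tᶜ.sum_le_card_nsmul _ κ fun i _ => hc'hi i j
  rw [← Finset.sum_add_sum_compl T]
  constructor
  · gcongr; linarith
  · gcongr

/-- Descent direction bounds under arbitrary substitution of up to `n` of the `b`
training samples, with element-wise gradient clipping at level `κ`. -/
theorem descent_direction_bounds_substitution
    (b n d : ℕ) (hn : n ≤ b) (κ : ℝ) (hκ : 0 ≤ κ)
    (c L U : Fin b → Fin d → ℝ)
    (hLκ : ∀ i j, -κ ≤ L i j) (hL : ∀ i j, L i j ≤ c i j)
    (hU : ∀ i j, c i j ≤ U i j) (hUκ : ∀ i j, U i j ≤ κ)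
    (c' : Fin b → Fin d → ℝ)
    (hc'lo : ∀ i j, -κ ≤ c' i j) (hc'hi : ∀ i j, c' i j ≤ κ)
    (S : Finset (Fin b)) (hScard : b - n ≤ S.card)
    (hSfix : ∀ i ∈ S, c' i = c i) (j : Fin d) :
    (1 / (b : ℝ)) * (SEMin (fun i => L i j) (b - n) - n * κ) ≤
        (1 / (b : ℝ)) * ∑ i, c' i j ∧
      (1 / (b : ℝ)) * ∑ i, c' i j ≤
        (1 / (b : ℝ)) * (SEMax (fun i => U i j) (b - n) + n * κ) :=
  descent_direction_bounds_substitution_general b n d hn κ c L U hL hU c' hc'lo hc'hi S hScard hSfix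
    j
end

section
/- Let b, n, d be natural numbers with n ≤ b. Let δ, L, U : Fin b → Fin d → ℝ be nominal per-sample gradients and their element-wise bounds with L i j ≤ δ i j ≤ U i j for all i, j, and let L̃, Ũ : Fin b → Fin d → ℝ be element-wise bounds capturing the combined effect of bounded perturbations, satisfying L̃ i j ≤ L i j and U i j ≤ Ũ i j for all i, j. Let δ̃ : Fin b → Fin d → ℝ be a perturbed family of per-sample gradients such that there exists a subset P ⊆ Fin b with |P| ≤ n, with L̃ i j ≤ δ̃ i j ≤ Ũ i j for i ∈ P and δ̃ i = δ i for i ∉ P. Then for every coordinate j : Fin d, (1/b) · (SEMin_n{L̃ i j − L i j}_{i=1}^{b} + ∑_{i=1}^{b} L i j) ≤ (1/b) · ∑_{i=1}^{b} δ̃ i j ≤ (1/b) · (SEMax_n{Ũ i j − U i j}_{i=1}^{b} + ∑_{i=1}^{b} U i j). (Theorem: descent direction bounds under bounded perturbation of up to n training samples.) -/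
namespace List

variable {α : Type*} [AddCommMonoid α]

theorem sum_le_sum_take_length_of_sublist [PartialOrder α] [IsOrderedAddMonoid α]
    {s l : List α} (hl : l.Pairwise (· ≥ ·)) (hs : s <+ l) :
    s.sum ≤ (l.take s.length).sum := by
  induction hs with
  | slnil => simp
  | @cons s l a hs ih =>
    obtain ⟨ha, hl⟩ := pairwise_cons.mp hl
    rcases s with _ | ⟨x, t⟩
    · simp
    · have ht : t.length < l.length := hs.length_le
      calc (x :: t).sum ≤ (l.take (t.length + 1)).sum := ih hl
        _ = (l.take t.length).sum + l[t.length] := sum_take_succ l _ ht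
        _ ≤ (l.take t.length).sum + a := by gcongr; exact ha _ (getElem_mem ht)
        _ = ((a :: l).take (x :: t).length).sum := by simp [add_comm]
  | @cons_cons s l a _ ih =>
    simp only [sum_cons, length_cons, take_succ_cons]
    gcongr
    exact ih (pairwise_cons.mp hl).2

theorem sum_le_sum_take_of_subperm [LinearOrder α] [IsOrderedAddMonoid α]
    {s l : List α} {n : ℕ} (hl : l.Pairwise (· ≥ ·)) (hl₀ : ∀ x ∈ l, 0 ≤ x)
    (hs : s <+~ l) (hn : s.length ≤ n) :
    s.sum ≤ (l.take n).sum := by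
  have hperm := mergeSort_perm s (· ≥ ·)
  have hsub : s.mergeSort (· ≥ ·) <+ l :=
    sublist_of_subperm_of_pairwise (hperm.subperm.trans hs) (pairwise_mergeSort' _ s) hl
  calc s.sum = (s.mergeSort (· ≥ ·)).sum := hperm.sum_eq.symm
    _ ≤ (l.take s.length).sum := by
      simpa using (sum_le_sum_take_length_of_sublist hl hsub)
    _ ≤ (l.take s.length).sum + ((l.drop s.length).take (n - s.length)).sum :=
      le_add_of_nonneg_right <| sum_nonneg fun x hx => hl₀ x (mem_of_mem_drop (mem_of_mem_take hx))
    _ = (l.take n).sum := by rw [← sum_append, ← take_add, Nat.add_sub_cancel' hn]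

end List

theorem Finset.map_toList_subperm_ofFn {α : Type*} {b : ℕ} (a : Fin b → α) (S : Finset (Fin b)) :
    (S.toList.map a).Subperm (List.ofFn a) := by
  rw [List.ofFn_eq_map]
  obtain ⟨t, hperm, hsub⟩ :=
    List.subperm_of_subset S.nodup_toList fun i _ => List.mem_finRange i
  exact ⟨t.map a, hperm.map a, hsub.map a⟩

theorem Finset.sum_le_sum_take_mergeSort_ofFn {α : Type*} [AddCommMonoid α] [LinearOrder α]
    [IsOrderedAddMonoid α] {b n : ℕ} {a : Fin b → α} (ha : ∀ i, 0 ≤ a i) {S : Finset (Fin b)}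
    (hS : S.card ≤ n) :
    ∑ i ∈ S, a i ≤ (((List.ofFn a).mergeSort (· ≥ ·)).take n).sum := by
  have hperm := List.mergeSort_perm (List.ofFn a) (· ≥ ·)
  rw [← Finset.sum_map_toList]
  refine List.sum_le_sum_take_of_subperm (List.pairwise_mergeSort' _ _) (fun x hx => ?_)
    ((S.map_toList_subperm_ofFn a).trans hperm.symm.subperm) (by simpa using hS)
  obtain ⟨i, rfl⟩ := List.mem_ofFn.mp (hperm.subset hx)
  exact ha i

theorem sum_le_SEMax {b n : ℕ} {a : Fin b → ℝ} (ha : ∀ i, 0 ≤ a i) {S : Finset (Fin b)}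
    (hS : S.card ≤ n) : ∑ i ∈ S, a i ≤ SEMax a n :=
  Finset.sum_le_sum_take_mergeSort_ofFn ha hS

theorem SEMin_le_sum {b n : ℕ} {a : Fin b → ℝ} (ha : ∀ i, a i ≤ 0) {S : Finset (Fin b)}
    (hS : S.card ≤ n) : SEMin a n ≤ ∑ i ∈ S, a i :=
  -- sorting by `≥` in `ℝᵒᵈ` is sorting by `≤` in `ℝ`
  Finset.sum_le_sum_take_mergeSort_ofFn (α := ℝᵒᵈ) (a := OrderDual.toDual ∘ a) ha hS

theorem Finset.sum_add_sum_sub_le_sum {ι α : Type*} [Fintype ι] [DecidableEq ι] [AddCommGroup α]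
    [PartialOrder α] [IsOrderedAddMonoid α] (P : Finset ι) {f g h : ι → α}
    (hP : ∀ i ∈ P, g i ≤ h i) (hPc : ∀ i ∉ P, f i ≤ h i) :
    ∑ i, f i + ∑ i ∈ P, (g i - f i) ≤ ∑ i, h i :=
  calc ∑ i, f i + ∑ i ∈ P, (g i - f i) = ∑ i ∈ P, g i + ∑ i ∈ Pᶜ, f i := by
        rw [sum_sub_distrib, ← sum_add_sum_compl P f]; abel
    _ ≤ ∑ i ∈ P, h i + ∑ i ∈ Pᶜ, h i :=
        add_le_add (sum_le_sum hP) (sum_le_sum fun i hi => hPc i (mem_compl.mp hi))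
    _ = ∑ i, h i := sum_add_sum_compl P h

theorem descent_direction_bounds_bounded_perturbation_general
    (b n d : ℕ)
    (δ L U L' U' : Fin b → Fin d → ℝ)
    (hL : ∀ i j, L i j ≤ δ i j) (hU : ∀ i j, δ i j ≤ U i j)
    (hL' : ∀ i j, L' i j ≤ L i j) (hU' : ∀ i j, U i j ≤ U' i j)
    (δ' : Fin b → Fin d → ℝ)
    (P : Finset (Fin b)) (hP : P.card ≤ n)
    (hpert : ∀ i ∈ P, ∀ j, L' i j ≤ δ' i j ∧ δ' i j ≤ U' i j)
    (hfix : ∀ i ∉ P, δ' i = δ i) (j : Fin d) :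
    (1 / (b : ℝ)) * (SEMin (fun i => L' i j - L i j) n + ∑ i, L i j) ≤
        (1 / (b : ℝ)) * ∑ i, δ' i j ∧
      (1 / (b : ℝ)) * ∑ i, δ' i j ≤
        (1 / (b : ℝ)) * (SEMax (fun i => U' i j - U i j) n + ∑ i, U i j) := by
  classical
  have hlower : SEMin (fun i => L' i j - L i j) n + ∑ i, L i j ≤ ∑ i, δ' i j :=
    calc _ ≤ ∑ i, L i j + ∑ i ∈ P, (L' i j - L i j) := by
          rw [add_comm]; gcongr; exact SEMin_le_sum (fun i => sub_nonpos.mpr (hL' i j)) hP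
      _ ≤ ∑ i, δ' i j := P.sum_add_sum_sub_le_sum (fun i hi => (hpert i hi j).1)
          fun i hi => hfix i hi ▸ hL i j
  have hupper : ∑ i, δ' i j ≤ SEMax (fun i => U' i j - U i j) n + ∑ i, U i j :=
    calc ∑ i, δ' i j ≤ ∑ i, U i j + ∑ i ∈ P, (U' i j - U i j) :=
          P.sum_add_sum_sub_le_sum (α := ℝᵒᵈ) (fun i hi => (hpert i hi j).2)
            fun i hi => hfix i hi ▸ hU i j
      _ ≤ _ := by
          rw [add_comm]; gcongr; exact sum_le_SEMax (fun i => sub_nonneg.mpr (hU' i j)) hP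
  exact ⟨by gcongr, by gcongr⟩

/-- Descent direction bounds under bounded perturbation of up to `n` of the `b`
training samples. -/
theorem descent_direction_bounds_bounded_perturbation
    (b n d : ℕ) (hn : n ≤ b)
    (δ L U L' U' : Fin b → Fin d → ℝ)
    (hL : ∀ i j, L i j ≤ δ i j) (hU : ∀ i j, δ i j ≤ U i j)
    (hL' : ∀ i j, L' i j ≤ L i j) (hU' : ∀ i j, U i j ≤ U' i j)
    (δ' : Fin b → Fin d → ℝ)
    (P : Finset (Fin b)) (hP : P.card ≤ n)
    (hpert : ∀ i ∈ P, ∀ j, L' i j ≤ δ' i j ∧ δ' i j ≤ U' i j)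
    (hfix : ∀ i ∉ P, δ' i = δ i) (j : Fin d) :
    (1 / (b : ℝ)) * (SEMin (fun i => L' i j - L i j) n + ∑ i, L i j) ≤
        (1 / (b : ℝ)) * ∑ i, δ' i j ∧
      (1 / (b : ℝ)) * ∑ i, δ' i j ≤
        (1 / (b : ℝ)) * (SEMax (fun i => U' i j - U i j) n + ∑ i, U i j) :=
  descent_direction_bounds_bounded_perturbation_general b n d δ L U L' U' hL hU hL' hU' δ' P hP
    hpert hfix j
end

section
/- Fix a depth K and layer widths d_0, …, d_K. Consider a K-layer ReLU network with true activations z^{(0)} = x, ẑ^{(k)} = W^{(k)} z^{(k−1)} + b^{(k)}, z^{(k)} = ReLU(ẑ^{(k)}) (coordinate-wise), and squared error loss L = ‖ẑ^{(K)} − y‖₂² (no activation on the final layer), with backpropagated quantities defined by g^{(K)} = 2(ẑ^{(K)} − y), g^{(k−1)} = (W^{(k)})ᵀ (H(ẑ^{(k)}) ∘ g^{(k)}) for k < K-indices, and weight gradients D^{(k)} = (H(ẑ^{(k)}) ∘ g^{(k)}) (z^{(k−1)})ᵀ, D̂^{(K)} = g^{(K)} (z^{(K−1)})ᵀ, and bias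 gradients equal to the corresponding pre-activation gradients, where H is the Heaviside function (H(a)=1 if a>0 else 0). Suppose entrywise interval bounds are given on the input (x_L ≤ x ≤ x_U), label (y_L ≤ y ≤ y_U), and all parameters (W_L^{(k)} ≤ W^{(k)} ≤ W_U^{(k)}, b_L^{(k)} ≤ b^{(k)} ≤ b_U^{(k)}). Define forward interval bounds on all ẑ^{(k)}, z^{(k)} by interval affine propagation (per-entry min/max of the four endpoint products, plus bias interval) followed by applying ReLU to endpoints; define the loss-gradient interval as [2(ẑ_L^{(K)} − y_U), 2(ẑ_U^{(K)} − y_L)]; and define backward interval bounds on each g^{(k)} and each weight/bias gradient by interval element-wise products with [H(ẑ_L^{(k)}), H(ẑ_U^{(k)})], interval transposed matrix–vector products, and interval outer products (each per-entry min/max of the four endpoint products). Then for every layer k, the true gradients with respect to W^{(k)} and b^{(k)} lie entrywise within the computed interval bounds, for every choice of x ∈ [x_L, x_U], y ∈ [y_L, y_U], and parameters within their intervals. (Complete interval enclosure of per-sample parameter gradients of a ReLU network under interval-valued inputs, labels, and parameters.) -/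
/-- The Heaviside step function: `1` for positive inputs, `0` otherwise. -/
noncomputable def heaviside (a : ℝ) : ℝ := if 0 < a then 1 else 0

/-- Lower endpoint of the product of the intervals `[aL, aU]` and `[bL, bU]`:
the minimum of the four pairwise products of interval endpoints. -/
def intervalMulLo (aL aU bL bU : ℝ) : ℝ :=
  min (min (aL * bL) (aL * bU)) (min (aU * bL) (aU * bU))

/-- Upper endpoint of the product of the intervals `[aL, aU]` and `[bL, bU]`:
the maximum of the four pairwise products of interval endpoints. -/
def intervalMulHi (aL aU bL bU : ℝ) : ℝ :=
  max (max (aL * bL) (aL * bU)) (max (aU * bL) (aU * bU))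

lemma hv_mono {a b : ℝ} (h : a ≤ b) : heaviside a ≤ heaviside b := by
  unfold heaviside; split_ifs with h1 h2 <;> try norm_num
  exact absurd (lt_of_lt_of_le h1 h) h2

lemma min_mul_le' {aL a aU : ℝ} (h1 : aL ≤ a) (h2 : a ≤ aU) (c : ℝ) :
    min (aL * c) (aU * c) ≤ a * c := by
  rcases le_total 0 c with hc | hc
  · exact le_trans (min_le_left _ _) (mul_le_mul_of_nonneg_right h1 hc)
  · exact le_trans (min_le_right _ _) (mul_le_mul_of_nonpos_right h2 hc)

lemma mul_le_max' {aL a aU : ℝ} (h1 : aL ≤ a) (h2 : a ≤ aU) (c : ℝ) :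
    a * c ≤ max (aL * c) (aU * c) := by
  rcases le_total 0 c with hc | hc
  · exact le_trans (mul_le_mul_of_nonneg_right h2 hc) (le_max_right _ _)
  · exact le_trans (mul_le_mul_of_nonpos_right h1 hc) (le_max_left _ _)

lemma intervalMulLo_le {aL a aU bL b bU : ℝ}
    (ha1 : aL ≤ a) (ha2 : a ≤ aU) (hb1 : bL ≤ b) (hb2 : b ≤ bU) :
    intervalMulLo aL aU bL bU ≤ a * b := by
  have h1 : min (bL * a) (bU * a) ≤ b * a := min_mul_le' hb1 hb2 a
  have h2 : min (a * bL) (a * bU) ≤ a * b := by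
    simpa [mul_comm] using h1
  refine le_trans (le_min ?_ ?_) h2
  · exact le_trans (le_min (le_trans (min_le_left _ _) (min_le_left _ _))
      (le_trans (min_le_right _ _) (min_le_left _ _))) (min_mul_le' ha1 ha2 bL)
  · exact le_trans (le_min (le_trans (min_le_left _ _) (min_le_right _ _))
      (le_trans (min_le_right _ _) (min_le_right _ _))) (min_mul_le' ha1 ha2 bU)

lemma le_intervalMulHi {aL a aU bL b bU : ℝ}
    (ha1 : aL ≤ a) (ha2 : a ≤ aU) (hb1 : bL ≤ b) (hb2 : b ≤ bU) :
    a * b ≤ intervalMulHi aL aU bL bU := by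
  have h1 : b * a ≤ max (bL * a) (bU * a) := mul_le_max' hb1 hb2 a
  have h2 : a * b ≤ max (a * bL) (a * bU) := by
    simpa [mul_comm] using h1
  refine le_trans h2 (max_le ?_ ?_)
  · exact le_trans (mul_le_max' ha1 ha2 bL) (max_le
      (le_trans (le_max_left _ _) (le_max_left _ _))
      (le_trans (le_max_left _ _) (le_max_right _ _)))
  · exact le_trans (mul_le_max' ha1 ha2 bU) (max_le
      (le_trans (le_max_right _ _) (le_max_left _ _))
      (le_trans (le_max_right _ _) (le_max_right _ _)))

lemma intervalMul_encl {aL a aU bL b bU : ℝ}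
    (ha1 : aL ≤ a) (ha2 : a ≤ aU) (hb1 : bL ≤ b) (hb2 : b ≤ bU) :
    intervalMulLo aL aU bL bU ≤ a * b ∧ a * b ≤ intervalMulHi aL aU bL bU :=
  ⟨intervalMulLo_le ha1 ha2 hb1 hb2, le_intervalMulHi ha1 ha2 hb1 hb2⟩

/-- Complete interval enclosure of the per-sample parameter gradients of a `K`-layer
ReLU network with squared-error loss (no activation on the final layer), under
interval-valued inputs, labels, and parameters.

Layer `k + 1` (for `k < K`) has weight matrix `W k : ℝ^{d (k+1) × d k}` and bias
`b k : ℝ^{d (k+1)}`.  `zhat (k+1)` and `z (k+1)` are its pre- and post-activations,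
`gp (k+1)` is the backpropagated gradient of the loss with respect to `zhat (k+1)`
(with the Heaviside convention for the ReLU derivative), `g k` is the gradient with
respect to `z k`, `DW k` is the gradient with respect to `W k`, and `gp (k+1)` is the
gradient with respect to `b k`.  The `L`/`U`-suffixed families are the interval bounds
computed by interval bound propagation through the forward and backward passes. -/
theorem interval_gradient_enclosure_relu_network
    (K : ℕ) (d : ℕ → ℕ)
    -- parameters and their interval bounds
    (W WL WU : ∀ k : ℕ, Matrix (Fin (d (k + 1))) (Fin (d k)) ℝ)
    (b bL bU : ∀ k : ℕ, Fin (d (k + 1)) → ℝ)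
    (hW : ∀ k, k < K → ∀ j i, WL k j i ≤ W k j i ∧ W k j i ≤ WU k j i)
    (hb : ∀ k, k < K → ∀ j, bL k j ≤ b k j ∧ b k j ≤ bU k j)
    -- input and label, with their interval bounds
    (x xL xU : Fin (d 0) → ℝ) (hx : ∀ i, xL i ≤ x i ∧ x i ≤ xU i)
    (y yL yU : Fin (d K) → ℝ) (hy : ∀ j, yL j ≤ y j ∧ y j ≤ yU j)
    -- true forward pass: z 0 = x, zhat (k+1) = W k z k + b k,
    -- z (k+1) = ReLU (zhat (k+1)) on all but the final layer
    (z zhat : ∀ k : ℕ, Fin (d k) → ℝ)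
    (hz0 : ∀ i, z 0 i = x i)
    (hzhat : ∀ k, k < K → ∀ j, zhat (k + 1) j = ((W k).mulVec (z k) + b k) j)
    (hz : ∀ k, k + 1 < K → ∀ j, z (k + 1) j = max (zhat (k + 1) j) 0)
    -- interval forward pass
    (zL zU zhatL zhatU : ∀ k : ℕ, Fin (d k) → ℝ)
    (hzL0 : ∀ i, zL 0 i = xL i) (hzU0 : ∀ i, zU 0 i = xU i)
    (hzhatL : ∀ k, k < K → ∀ j,
      zhatL (k + 1) j =
        (∑ i, intervalMulLo (WL k j i) (WU k j i) (zL k i) (zU k i)) + bL k j)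
    (hzhatU : ∀ k, k < K → ∀ j,
      zhatU (k + 1) j =
        (∑ i, intervalMulHi (WL k j i) (WU k j i) (zL k i) (zU k i)) + bU k j)
    (hzL : ∀ k, k + 1 < K → ∀ j, zL (k + 1) j = max (zhatL (k + 1) j) 0)
    (hzU : ∀ k, k + 1 < K → ∀ j, zU (k + 1) j = max (zhatU (k + 1) j) 0)
    -- true backward pass: gp K = 2 (zhat K − y);
    -- g k = (W k)ᵀ gp (k+1); gp k = H (zhat k) ∘ g k for 1 ≤ k < K
    (g gp : ∀ k : ℕ, Fin (d k) → ℝ)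
    (hgpK : ∀ j, gp K j = 2 * (zhat K j - y j))
    (hg : ∀ k, k < K → ∀ i, g k i = (W k).transpose.mulVec (gp (k + 1)) i)
    (hgp : ∀ k, 1 ≤ k → k < K → ∀ i, gp k i = heaviside (zhat k i) * g k i)
    -- interval backward pass
    (gL gU gpL gpU : ∀ k : ℕ, Fin (d k) → ℝ)
    (hgpLK : ∀ j, gpL K j = 2 * (zhatL K j - yU j))
    (hgpUK : ∀ j, gpU K j = 2 * (zhatU K j - yL j))
    (hgL : ∀ k, k < K → ∀ i,
      gL k i = ∑ j, intervalMulLo (WL k j i) (WU k j i) (gpL (k + 1) j) (gpU (k + 1) j))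
    (hgU : ∀ k, k < K → ∀ i,
      gU k i = ∑ j, intervalMulHi (WL k j i) (WU k j i) (gpL (k + 1) j) (gpU (k + 1) j))
    (hgpL : ∀ k, 1 ≤ k → k < K → ∀ i,
      gpL k i =
        intervalMulLo (heaviside (zhatL k i)) (heaviside (zhatU k i)) (gL k i) (gU k i))
    (hgpU : ∀ k, 1 ≤ k → k < K → ∀ i,
      gpU k i =
        intervalMulHi (heaviside (zhatL k i)) (heaviside (zhatU k i)) (gL k i) (gU k i))
    -- true weight gradients (outer products) and their interval bounds
    (DW DWL DWU : ∀ k : ℕ, Matrix (Fin (d (k + 1))) (Fin (d k)) ℝ)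
    (hDW : ∀ k, k < K → ∀ j i, DW k j i = gp (k + 1) j * z k i)
    (hDWL : ∀ k, k < K → ∀ j i,
      DWL k j i = intervalMulLo (gpL (k + 1) j) (gpU (k + 1) j) (zL k i) (zU k i))
    (hDWU : ∀ k, k < K → ∀ j i,
      DWU k j i = intervalMulHi (gpL (k + 1) j) (gpU (k + 1) j) (zL k i) (zU k i)) :
    -- conclusion: for every layer, the true weight and bias gradients lie within the
    -- computed interval bounds
    ∀ k, k < K →
      (∀ j i, DWL k j i ≤ DW k j i ∧ DW k j i ≤ DWU k j i) ∧
        (∀ j, gpL (k + 1) j ≤ gp (k + 1) j ∧ gp (k + 1) j ≤ gpU (k + 1) j) := by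

  -- forward pass bounds
  have fwdZhat : ∀ k, k < K → (∀ i, zL k i ≤ z k i ∧ z k i ≤ zU k i) →
      ∀ j, zhatL (k + 1) j ≤ zhat (k + 1) j ∧ zhat (k + 1) j ≤ zhatU (k + 1) j := by
    intro k hk hzb j
    rw [hzhat k hk j, hzhatL k hk j, hzhatU k hk j]
    simp only [Pi.add_apply, Matrix.mulVec, dotProduct]
    constructor
    · exact add_le_add (Finset.sum_le_sum fun i _ =>
        (intervalMul_encl (hW k hk j i).1 (hW k hk j i).2 (hzb i).1 (hzb i).2).1)
        (hb k hk j).1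
    · exact add_le_add (Finset.sum_le_sum fun i _ =>
        (intervalMul_encl (hW k hk j i).1 (hW k hk j i).2 (hzb i).1 (hzb i).2).2)
        (hb k hk j).2
  have fwdZ : ∀ k, k < K → ∀ i, zL k i ≤ z k i ∧ z k i ≤ zU k i := by
    intro k
    induction k with
    | zero => intro _ i; rw [hz0, hzL0, hzU0]; exact hx i
    | succ k ih =>
      intro hk i
      have hkK : k < K := Nat.lt_of_succ_lt hk
      have hzh := fwdZhat k hkK (ih hkK) i
      rw [hz k hk i, hzL k hk i, hzU k hk i]
      exact ⟨max_le_max hzh.1 le_rfl, max_le_max hzh.2 le_rfl⟩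
  have fwdZhat' : ∀ k, k < K →
      ∀ j, zhatL (k + 1) j ≤ zhat (k + 1) j ∧ zhat (k + 1) j ≤ zhatU (k + 1) j :=
    fun k hk => fwdZhat k hk (fwdZ k hk)
  -- backward pass bounds
  have bwd : ∀ n k, k + n = K → 1 ≤ k →
      ∀ j, gpL k j ≤ gp k j ∧ gp k j ≤ gpU k j := by
    intro n
    induction n with
    | zero =>
      intro k hk hk1
      simp only [Nat.add_zero] at hk
      subst hk
      obtain _ | m := k
      · exact absurd hk1 (by norm_num)
      · intro j
        have hzh := fwdZhat' m (Nat.lt_succ_self m) j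
        rw [hgpK j, hgpLK j, hgpUK j]
        constructor <;> nlinarith [(hy j).1, (hy j).2, hzh.1, hzh.2]
    | succ n ih =>
      intro k hk hk1
      obtain _ | m := k
      · exact absurd hk1 (by norm_num)
      intro j
      have hk1' : 1 ≤ m + 1 := Nat.le_add_left 1 m
      have hkK : m + 1 < K := by omega
      have hgpb : ∀ j', gpL (m + 1 + 1) j' ≤ gp (m + 1 + 1) j' ∧
          gp (m + 1 + 1) j' ≤ gpU (m + 1 + 1) j' :=
        ih (m + 1 + 1) (by omega) (by omega)
      have hgb : ∀ i, gL (m + 1) i ≤ g (m + 1) i ∧ g (m + 1) i ≤ gU (m + 1) i := by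
        intro i
        rw [hg (m + 1) hkK i, hgL (m + 1) hkK i, hgU (m + 1) hkK i]
        simp only [Matrix.mulVec, Matrix.transpose_apply, dotProduct]
        constructor
        · exact Finset.sum_le_sum fun j' _ =>
            (intervalMul_encl (hW (m + 1) hkK j' i).1 (hW (m + 1) hkK j' i).2
              (hgpb j').1 (hgpb j').2).1
        · exact Finset.sum_le_sum fun j' _ =>
            (intervalMul_encl (hW (m + 1) hkK j' i).1 (hW (m + 1) hkK j' i).2
              (hgpb j').1 (hgpb j').2).2
      have hzh := fwdZhat' m (by omega) j
      rw [hgp (m + 1) hk1' hkK j, hgpL (m + 1) hk1' hkK j, hgpU (m + 1) hk1' hkK j]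
      exact intervalMul_encl (hv_mono hzh.1) (hv_mono hzh.2) (hgb j).1 (hgb j).2
  intro k hk
  have hgpb : ∀ j, gpL (k + 1) j ≤ gp (k + 1) j ∧ gp (k + 1) j ≤ gpU (k + 1) j :=
    bwd (K - (k + 1)) (k + 1) (by omega) (by omega)
  refine ⟨fun j i => ?_, hgpb⟩
  rw [hDW k hk j i, hDWL k hk j i, hDWU k hk j i]
  exact intervalMul_encl (hgpb j).1 (hgpb j).2 (fwdZ k hk i).1 (fwdZ k hk i).2
end
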